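/- Let C^{σ} = {t ∈ ℚ_p | ord(t−σ) = γ ∧ ac_m(t−σ) = ac_m(λ)} be a small cell with λ ≠ 0 and r := ord(λ−1) < m, and assume ord λ = 0. Define b ∈ ℚ_p with ord b = γ + r and ac_m(b) = ac_m(Λ(λ)), where Λ(λ) = λ − 1 if ac_1(λ) ≠ 1 and Λ(λ) = (λ−1)/p^r otherwise. Then C^{σ} = {t ∈ ℚ_p | ord(t−(σ+b)) = γ ∧ ac_m(t−(σ+b)) = 1}. -/

import Mathlib

open scoped Classical

namespace PaperCD

variable (p : ℕ) [hp : Fact p.Prime]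

/-- The unit part of a nonzero `p`-adic number: `x * p^(-ord x)`, an element of `ℤ_[p]`
of norm one; `0` is sent to `0`. -/
noncomputable def unitPart (x : ℚ_[p]) : ℤ_[p] :=
  if h : x = 0 then 0 else
    ⟨x * (p : ℚ_[p]) ^ (-x.valuation), by
      have hp0 : (p : ℝ) ≠ 0 := by exact_mod_cast hp.out.ne_zero
      have hx : ‖x * (p : ℚ_[p]) ^ (-x.valuation)‖ = 1 := by
        rw [norm_mul, Padic.norm_p_zpow, Padic.norm_eq_zpow_neg_valuation h, neg_neg,
          ← zpow_add₀ hp0]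
        simp
      exact le_of_eq hx⟩

/-- The angular component map of level `m`: `ac_m(x) = x·p^(-ord x) mod p^m`,
with `ac m 0 = 0`. -/
noncomputable def ac (m : ℕ) (x : ℚ_[p]) : ZMod (p ^ m) :=
  PadicInt.toZModPow m (unitPart p x)

/-- The closed ball of (valuative) radius `γ` around `a` in `ℚ_[p]`:
`{t | ord (t - a) ≥ γ}`. -/
def pball (γ : ℤ) (a : ℚ_[p]) : Set ℚ_[p] := {t | ‖t - a‖ ≤ (p : ℝ) ^ (-γ)}

end PaperCD

open PaperCD

/-!
For `c ≠ 0` and `m ≥ 1`, the conditions `ord u = ord c` and `ac_m u = ac_m c` together say that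
`u` lies in the closed ball of radius `ord c + m` around `c`. So the cell on the left is the ball
of radius `γ + m` around `σ + λ p^γ`, and the one on the right is the ball of the same radius
around `σ + b + p^γ`. Since `Λ(λ)` differs from `λ - 1` by a power of `p`, the hypotheses on `b`
put it within `p^(-(γ + r + m))` of `(λ - 1) p^γ`. As `r ≥ 0`, the two centres are then within
the common radius, and in an ultrametric space the two balls coincide.
-/

namespace PaperCD

variable {p : ℕ} [hp : Fact p.Prime]

lemma one_lt_prime_cast : (1 : ℝ) < p := mod_cast hp.out.one_lt

lemma prime_zpow_ne_zero (k : ℤ) : (p : ℚ_[p]) ^ k ≠ 0 :=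
  zpow_ne_zero _ (mod_cast hp.out.ne_zero)

lemma valuation_mul_prime_zpow {x : ℚ_[p]} (hx : x ≠ 0) (k : ℤ) :
    (x * (p : ℚ_[p]) ^ k).valuation = x.valuation + k := by
  rw [Padic.valuation_mul hx (prime_zpow_ne_zero k), Padic.valuation_zpow, Padic.valuation_p,
    mul_one]

lemma valuation_sub_one_nonneg {x : ℚ_[p]} (hx : 0 ≤ x.valuation) : 0 ≤ (x - 1).valuation := by
  rw [← Padic.norm_le_one_iff_val_nonneg] at hx ⊢
  simpa [sub_eq_add_neg] using (Padic.nonarchimedean x (-1)).trans (max_le hx (by simp))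

lemma valuation_eq_of_norm_sub_lt {u c : ℚ_[p]} (hc : c ≠ 0) (h : ‖u - c‖ < ‖c‖) :
    u ≠ 0 ∧ u.valuation = c.valuation := by
  have hn := Padic.norm_eq_of_norm_sub_lt_right h
  have hu : u ≠ 0 := by
    rintro rfl
    exact hc (norm_eq_zero.1 (by simpa using hn.symm))
  refine ⟨hu, ?_⟩
  rwa [Padic.norm_eq_zpow_neg_valuation hu, Padic.norm_eq_zpow_neg_valuation hc,
    zpow_right_inj₀ (zero_lt_one.trans one_lt_prime_cast) one_lt_prime_cast.ne', neg_inj] at hn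

lemma coe_unitPart {x : ℚ_[p]} (hx : x ≠ 0) :
    (unitPart p x : ℚ_[p]) = x * (p : ℚ_[p]) ^ (-x.valuation) := by
  simp [unitPart, hx]

lemma unitPart_mul_prime_zpow (x : ℚ_[p]) (k : ℤ) :
    unitPart p (x * (p : ℚ_[p]) ^ k) = unitPart p x := by
  rcases eq_or_ne x 0 with rfl | hx
  · simp
  apply Subtype.ext
  rw [coe_unitPart (mul_ne_zero hx (prime_zpow_ne_zero k)), coe_unitPart hx,
    valuation_mul_prime_zpow hx, mul_assoc, ← zpow_add₀ (mod_cast hp.out.ne_zero)]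
  congr 2
  ring

lemma norm_coe_unitPart_sub {x y : ℚ_[p]} (hx : x ≠ 0) (hy : y ≠ 0)
    (hxy : x.valuation = y.valuation) :
    ‖(unitPart p x : ℚ_[p]) - unitPart p y‖ = ‖x - y‖ * (p : ℝ) ^ y.valuation := by
  rw [coe_unitPart hx, coe_unitPart hy, hxy, ← sub_mul, norm_mul, Padic.norm_p_zpow, neg_neg]

lemma ac_eq_ac_iff {m : ℕ} {x y : ℚ_[p]} :
    ac p m x = ac p m y ↔
      ‖(unitPart p x : ℚ_[p]) - unitPart p y‖ ≤ (p : ℝ) ^ (-(m : ℤ)) := by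
  rw [ac, ac, ← sub_eq_zero, ← map_sub, ← RingHom.mem_ker, PadicInt.ker_toZModPow,
    ← PadicInt.norm_le_pow_iff_mem_span_pow, PadicInt.norm_def]
  rfl

lemma ac_eq_ac_iff_norm_sub_le {m : ℕ} {x y : ℚ_[p]} (hx : x ≠ 0) (hy : y ≠ 0)
    (hxy : x.valuation = y.valuation) :
    ac p m x = ac p m y ↔ ‖x - y‖ ≤ (p : ℝ) ^ (-(y.valuation + m)) := by
  have hp0 : (0 : ℝ) < p := zero_lt_one.trans one_lt_prime_cast
  rw [ac_eq_ac_iff, norm_coe_unitPart_sub hx hy hxy, ← le_div_iff₀ (zpow_pos hp0 _),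
    ← zpow_sub₀ hp0.ne', neg_add', neg_sub_comm]

lemma ac_mul_prime_zpow (m : ℕ) (x : ℚ_[p]) (k : ℤ) :
    ac p m (x * (p : ℚ_[p]) ^ k) = ac p m x := by
  rw [ac, ac, unitPart_mul_prime_zpow]

lemma ac_div_prime_zpow (m : ℕ) (x : ℚ_[p]) (k : ℤ) :
    ac p m (x / (p : ℚ_[p]) ^ k) = ac p m x := by
  rw [div_eq_mul_inv, ← zpow_neg, ac_mul_prime_zpow]

lemma ac_prime_zpow (m : ℕ) (k : ℤ) : ac p m ((p : ℚ_[p]) ^ k) = 1 := by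
  rw [← one_mul ((p : ℚ_[p]) ^ k), ac_mul_prime_zpow, ac, ← map_one (PadicInt.toZModPow m)]
  congr 1
  apply Subtype.ext
  simp [coe_unitPart]

theorem valuation_eq_and_ac_eq_iff_norm_sub_le {m : ℕ} (hm : 1 ≤ m) {u c : ℚ_[p]} (hc : c ≠ 0) :
    (u ≠ 0 ∧ u.valuation = c.valuation ∧ ac p m u = ac p m c) ↔
      ‖u - c‖ ≤ (p : ℝ) ^ (-(c.valuation + m)) := by
  refine ⟨fun ⟨hu, hv, hac⟩ ↦ (ac_eq_ac_iff_norm_sub_le hu hc hv).1 hac, fun h ↦ ?_⟩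
  have hlt : ‖u - c‖ < ‖c‖ := h.trans_lt <| by
    rw [Padic.norm_eq_zpow_neg_valuation hc]
    exact zpow_lt_zpow_right₀ one_lt_prime_cast (by omega)
  obtain ⟨hu, hv⟩ := valuation_eq_of_norm_sub_lt hc hlt
  exact ⟨hu, hv, (ac_eq_ac_iff_norm_sub_le hu hc hv).2 h⟩

theorem setOf_valuation_eq_and_ac_eq_eq_pball {m : ℕ} (hm : 1 ≤ m) (σ : ℚ_[p]) {c : ℚ_[p]}
    (hc : c ≠ 0) :
    {t : ℚ_[p] | t ≠ σ ∧ (t - σ).valuation = c.valuation ∧ ac p m (t - σ) = ac p m c} =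
      pball p (c.valuation + m) (σ + c) := by
  ext t
  rw [Set.mem_ofPred_eq, ← sub_ne_zero, valuation_eq_and_ac_eq_iff_norm_sub_le hm hc, pball,
    Set.mem_ofPred_eq, sub_sub]

lemma pball_eq_closedBall (γ : ℤ) (a : ℚ_[p]) :
    pball p γ a = Metric.closedBall a ((p : ℝ) ^ (-γ)) := by
  ext
  simp [pball, dist_eq_norm]

lemma pball_eq_pball_of_norm_sub_le {γ : ℤ} {a b : ℚ_[p]} (h : ‖a - b‖ ≤ (p : ℝ) ^ (-γ)) :
    pball p γ a = pball p γ b := by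
  rw [pball_eq_closedBall, pball_eq_closedBall]
  exact IsUltrametricDist.closedBall_eq_of_mem (by rwa [Metric.mem_closedBall, dist_comm,
    dist_eq_norm])

end PaperCD

theorem small_cell_translation_to_trivial_coset_general (p m : ℕ) [Fact p.Prime] (hm : 1 ≤ m)
    (γ : ℤ) (σ lam b : ℚ_[p])
    (hlam0 : lam ≠ 0) (hlam1 : lam ≠ 1) (hval : lam.valuation = 0)
    (hb0 : b ≠ 0) (hbv : b.valuation = γ + (lam - 1).valuation)
    (hbac : ac p m b = ac p m
      (if ac p 1 lam = 1 then (lam - 1) / (p : ℚ_[p]) ^ ((lam - 1).valuation)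
       else lam - 1)) :
    {t : ℚ_[p] | t ≠ σ ∧ (t - σ).valuation = γ ∧ ac p m (t - σ) = ac p m lam} =
      {t : ℚ_[p] | t ≠ σ + b ∧ (t - (σ + b)).valuation = γ ∧
        ac p m (t - (σ + b)) = 1} := by
  have hlam_sub_one : lam - 1 ≠ 0 := sub_ne_zero.2 hlam1
  have hc : ((lam - 1) * (p : ℚ_[p]) ^ γ).valuation = γ + (lam - 1).valuation := by
    rw [valuation_mul_prime_zpow hlam_sub_one, add_comm]
  have hΛ : ac p m (if ac p 1 lam = 1 then (lam - 1) / (p : ℚ_[p]) ^ ((lam - 1).valuation)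
      else lam - 1) = ac p m ((lam - 1) * (p : ℚ_[p]) ^ γ) := by
    split_ifs <;> simp only [ac_div_prime_zpow, ac_mul_prime_zpow]
  have hb : ‖b - (lam - 1) * (p : ℚ_[p]) ^ γ‖ ≤ (p : ℝ) ^ (-(γ + m)) := by
    refine ((valuation_eq_and_ac_eq_iff_norm_sub_le hm (mul_ne_zero hlam_sub_one
      (prime_zpow_ne_zero γ))).1 ⟨hb0, hbv.trans hc.symm, hbac.trans hΛ⟩).trans ?_
    have hr_nonneg := valuation_sub_one_nonneg hval.ge
    exact zpow_le_zpow_right₀ one_lt_prime_cast.le (by rw [hc]; omega)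
  calc _ = pball p (γ + m) (σ + lam * (p : ℚ_[p]) ^ γ) := by
        have h := setOf_valuation_eq_and_ac_eq_eq_pball hm σ
          (mul_ne_zero hlam0 (prime_zpow_ne_zero γ))
        rwa [valuation_mul_prime_zpow hlam0, hval, zero_add, ac_mul_prime_zpow] at h
    _ = pball p (γ + m) (σ + b + (p : ℚ_[p]) ^ γ) := by
        refine pball_eq_pball_of_norm_sub_le ?_
        rwa [show σ + lam * (p : ℚ_[p]) ^ γ - (σ + b + (p : ℚ_[p]) ^ γ)
          = -(b - (lam - 1) * (p : ℚ_[p]) ^ γ) by ring, norm_neg]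
    _ = _ := by
        have h := setOf_valuation_eq_and_ac_eq_eq_pball hm (σ + b) (prime_zpow_ne_zero γ)
        rw [Padic.valuation_zpow, Padic.valuation_p, mul_one, ac_prime_zpow] at h
        exact h.symm

theorem small_cell_translation_to_trivial_coset (p m : ℕ) [Fact p.Prime] (hm : 1 ≤ m)
    (γ : ℤ) (σ lam b : ℚ_[p])
    (hlam0 : lam ≠ 0) (hlam1 : lam ≠ 1) (hval : lam.valuation = 0)
    (hr : (lam - 1).valuation < (m : ℤ))
    (hb0 : b ≠ 0) (hbv : b.valuation = γ + (lam - 1).valuation)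
    (hbac : ac p m b = ac p m
      (if ac p 1 lam = 1 then (lam - 1) / (p : ℚ_[p]) ^ ((lam - 1).valuation)
       else lam - 1)) :
    {t : ℚ_[p] | t ≠ σ ∧ (t - σ).valuation = γ ∧ ac p m (t - σ) = ac p m lam} =
      {t : ℚ_[p] | t ≠ σ + b ∧ (t - (σ + b)).valuation = γ ∧
        ac p m (t - (σ + b)) = 1} :=
  small_cell_translation_to_trivial_coset_general p m hm γ σ lam b hlam0 hlam1 hval hb0 hbv hbac
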